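/- (A priori estimate for linear KdV with H⁻¹ forcing, weighted by x.) Let L, T > 0. There exists a constant C > 0 such that for every g ∈ C^∞([0,T]×[0,L]) and every u ∈ C^∞([0,T]×[0,L]) satisfying u_t + u_x + u_xxx = g_x on (0,T)×(0,L) and u(t,0) = u(t,L) = u_x(t,L) = 0 for all t ∈ [0,T], one has: max_{t∈[0,T]} ∫₀^L x · u(t,x)² dx + ∫₀^T∫₀^L u_x(t,x)² dx dt ≤ C ( ∫₀^L x · u(0,x)² dx + ∫₀^T∫₀^L g(t,x)² dx dt ). -/

import Mathlib

/-- Partial derivative in the space variable (second argument). -/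
noncomputable def pdx (f : ℝ → ℝ → ℝ) : ℝ → ℝ → ℝ := fun t x => deriv (f t) x

/-- Partial derivative in the time variable (first argument). -/
noncomputable def pdt (f : ℝ → ℝ → ℝ) : ℝ → ℝ → ℝ := fun t x => deriv (fun s => f s x) t

/-!
Multiply the equation by `2 x u` and integrate by parts in `x`. With `E = ∫ x u²` and
`D = ∫ u_x²`, the boundary conditions `u(0) = u(L) = u_x(L) = 0` give
`E' = ∫ u² - 3 D - ∫ (2 u g + 2 x u_x g)`.
Young's inequality bounds the forcing term by `∫ u² + D + (1 + L²) ∫ g²`. Since `u(0) = 0`,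
Cauchy–Schwarz gives `u(x)² ≤ x D`, so `u(x)² ≤ δ D + x u(x)² / δ` for every `δ > 0`;
with `δ = 1 / (2L)` this yields `∫ u² ≤ D / 2 + 2 L E`. Altogether
`E' + D ≤ 4 L E + (1 + L²) ∫ g²`, and Grönwall's lemma gives the estimate with
`C = 2 e^{4 L T} (1 + L²)`.
-/

open Function Set intervalIntegral

section PartialDerivatives

variable {F : ℝ → ℝ → ℝ}

lemma hasDerivAt_fderiv_apply_time (hF : Differentiable ℝ (uncurry F)) (t x : ℝ) :
    HasDerivAt (fun s => F s x) (fderiv ℝ (uncurry F) (t, x) (1, 0)) t :=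
  HasFDerivAt.comp_hasDerivAt (l := uncurry F) t (hF (t, x)).hasFDerivAt
    ((hasDerivAt_id' t).prodMk (hasDerivAt_const t x))

lemma hasDerivAt_fderiv_apply_space (hF : Differentiable ℝ (uncurry F)) (t x : ℝ) :
    HasDerivAt (F t) (fderiv ℝ (uncurry F) (t, x) (0, 1)) x :=
  (hF (t, x)).hasFDerivAt.comp_hasDerivAt x ((hasDerivAt_const x t).prodMk (hasDerivAt_id' x))

lemma hasDerivAt_pdt (hF : Differentiable ℝ (uncurry F)) (t x : ℝ) :
    HasDerivAt (fun s => F s x) (pdt F t x) t :=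
  (hasDerivAt_fderiv_apply_time hF t x).differentiableAt.hasDerivAt

lemma continuous_pdt (hF : ContDiff ℝ 1 (uncurry F)) : Continuous (uncurry (pdt F)) := by
  have h : uncurry (pdt F) = fun p => fderiv ℝ (uncurry F) p (1, 0) :=
    funext fun p => (hasDerivAt_fderiv_apply_time (hF.differentiable one_ne_zero) p.1 p.2).deriv
  rw [h]
  exact (hF.continuous_fderiv one_ne_zero).clm_apply continuous_const

lemma continuous_pdx (hF : ContDiff ℝ 1 (uncurry F)) : Continuous (uncurry (pdx F)) := by
  have h : uncurry (pdx F) = fun p => fderiv ℝ (uncurry F) p (0, 1) :=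
    funext fun p => (hasDerivAt_fderiv_apply_space (hF.differentiable one_ne_zero) p.1 p.2).deriv
  rw [h]
  exact (hF.continuous_fderiv one_ne_zero).clm_apply continuous_const

lemma ContDiff.uncurry_left {n : WithTop ℕ∞} (hF : ContDiff ℝ n (uncurry F)) (t : ℝ) :
    ContDiff ℝ n (F t) :=
  hF.comp (contDiff_const.prodMk contDiff_id)

end PartialDerivatives

lemma hasDerivAt_intervalIntegral_of_continuous {F F' : ℝ → ℝ → ℝ}
    (hF : Continuous (uncurry F)) (hF' : Continuous (uncurry F'))
    (hderiv : ∀ t x, HasDerivAt (fun s => F s x) (F' t x) t) (a b t₀ : ℝ) :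
    HasDerivAt (fun t => ∫ x in a..b, F t x) (∫ x in a..b, F' t₀ x) t₀ := by
  obtain ⟨M, hM⟩ := (isCompact_Icc.prod isCompact_uIcc).exists_bound_of_continuousOn
    (s := Icc (t₀ - 1) (t₀ + 1) ×ˢ uIcc a b) hF'.continuousOn
  refine (hasDerivAt_integral_of_dominated_loc_of_deriv_le (bound := fun _ => M)
    (Metric.ball_mem_nhds t₀ one_pos) ?_ ((hF.uncurry_left t₀).intervalIntegrable a b)
    (hF'.uncurry_left t₀).aestronglyMeasurable ?_ intervalIntegrable_const ?_).2
  · exact Filter.Eventually.of_forall fun t => (hF.uncurry_left t).aestronglyMeasurable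
  · refine Filter.Eventually.of_forall fun x hx t ht => hM (t, x) ⟨?_, uIoc_subset_uIcc hx⟩
    rw [Metric.mem_ball, Real.dist_eq, abs_lt] at ht
    constructor <;> linarith [ht.1, ht.2]
  · exact Filter.Eventually.of_forall fun x _ t _ => hderiv t x

lemma sq_integral_le_mul_integral_sq {f : ℝ → ℝ} (hf : Continuous f) {a b : ℝ} (hab : a ≤ b) :
    (∫ x in a..b, f x) ^ 2 ≤ (b - a) * ∫ x in a..b, f x ^ 2 := by
  set A := ∫ x in a..b, f x
  set B := ∫ x in a..b, f x ^ 2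
  have hexp : ∫ x in a..b, ((b - a) * f x - A) ^ 2 = (b - a) * ((b - a) * B - A ^ 2) := by
    have h : ∀ x, ((b - a) * f x - A) ^ 2 = (b - a) ^ 2 * f x ^ 2 - 2 * (b - a) * A * f x + A ^ 2 :=
      fun x => by ring
    simp only [h]
    rw [integral_add ((by fun_prop : Continuous _).intervalIntegrable _ _) intervalIntegrable_const,
      integral_sub ((by fun_prop : Continuous _).intervalIntegrable _ _)
        ((by fun_prop : Continuous _).intervalIntegrable _ _),
      integral_const_mul, integral_const_mul, integral_const, smul_eq_mul]
    ring
  have hnonneg : 0 ≤ (b - a) * ((b - a) * B - A ^ 2) :=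
    hexp ▸ integral_nonneg hab fun x _ => sq_nonneg _
  rcases hab.eq_or_lt with rfl | hlt
  · simp [A]
  · linarith [(mul_nonneg_iff_of_pos_left (sub_pos.2 hlt)).1 hnonneg]

lemma integral_eq_neg_integral_of_hasDerivAt_add {φ p q : ℝ → ℝ} {a b : ℝ}
    (hφ : ∀ x ∈ uIcc a b, HasDerivAt φ (p x + q x) x) (hp : Continuous p) (hq : Continuous q)
    (ha : φ a = 0) (hb : φ b = 0) :
    ∫ x in a..b, p x = -∫ x in a..b, q x := by
  have h := integral_eq_sub_of_hasDerivAt hφ ((hp.add hq).intervalIntegrable a b)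
  rw [integral_add (hp.intervalIntegrable a b) (hq.intervalIntegrable a b), ha, hb] at h
  linarith

section OneDimensional

variable {f h : ℝ → ℝ} {L : ℝ}

lemma integral_weight_mul_deriv_eq (hf : ContDiff ℝ 1 f) (hfL : f L = 0) :
    ∫ x in 0..L, 2 * x * f x * deriv f x = -∫ x in 0..L, f x ^ 2 := by
  refine integral_eq_neg_integral_of_hasDerivAt_add (φ := fun x => x * f x ^ 2)
    (fun x _ => ?_) (by fun_prop) (by fun_prop) (by simp) (by simp [hfL])
  exact ((hasDerivAt_id' x).fun_mul
    ((hf.differentiable one_ne_zero x).hasDerivAt.fun_pow 2)).congr_deriv (by ring)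

lemma integral_weight_mul_third_deriv_eq (hf : ContDiff ℝ 3 f) (hf0 : f 0 = 0)
    (hfL : f L = 0) (hf'L : deriv f L = 0) :
    ∫ x in 0..L, 2 * x * f x * deriv (deriv (deriv f)) x = 3 * ∫ x in 0..L, deriv f x ^ 2 := by
  have hf1 : ContDiff ℝ 2 (deriv f) := hf.deriv'
  have hf2 : ContDiff ℝ 1 (deriv (deriv f)) := hf1.deriv'
  have hd : ∀ x, HasDerivAt f (deriv f x) x :=
    fun x => (hf.differentiable (by norm_num) x).hasDerivAt
  have hd1 : ∀ x, HasDerivAt (deriv f) (deriv (deriv f) x) x :=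
    fun x => (hf1.differentiable (by norm_num) x).hasDerivAt
  have hd2 : ∀ x, HasDerivAt (deriv (deriv f)) (deriv (deriv (deriv f)) x) x :=
    fun x => (hf2.differentiable one_ne_zero x).hasDerivAt
  have hA : ∫ x in 0..L, 2 * (f x * deriv (deriv f) x) = -∫ x in 0..L, 2 * deriv f x ^ 2 := by
    refine integral_eq_neg_integral_of_hasDerivAt_add (φ := fun x => 2 * (f x * deriv f x))
      (fun x _ => ?_) (by fun_prop) (by fun_prop) (by simp [hf0]) (by simp [hfL])
    exact (((hd x).fun_mul (hd1 x)).const_mul 2).congr_deriv (by ring)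
  have hB : ∫ x in 0..L, 2 * x * (deriv f x * deriv (deriv f) x)
      = -∫ x in 0..L, deriv f x ^ 2 := by
    refine integral_eq_neg_integral_of_hasDerivAt_add (φ := fun x => x * deriv f x ^ 2)
      (fun x _ => ?_) (by fun_prop) (by fun_prop) (by simp) (by simp [hf'L])
    exact ((hasDerivAt_id' x).fun_mul ((hd1 x).fun_pow 2)).congr_deriv (by ring)
  have hC : ∫ x in 0..L, 2 * x * f x * deriv (deriv (deriv f)) x
      = -∫ x in 0..L,
          (2 * (f x * deriv (deriv f) x) + 2 * x * (deriv f x * deriv (deriv f) x)) := by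
    refine integral_eq_neg_integral_of_hasDerivAt_add
      (φ := fun x => 2 * x * f x * deriv (deriv f) x)
      (fun x _ => ?_) (by fun_prop) (by fun_prop) (by simp) (by simp [hfL])
    exact ((((hasDerivAt_id' x).const_mul 2).fun_mul (hd x)).fun_mul (hd2 x)).congr_deriv
      (by ring)
  rw [hC, integral_add ((by fun_prop : Continuous _).intervalIntegrable _ _)
    ((by fun_prop : Continuous _).intervalIntegrable _ _), hA, hB, integral_const_mul]
  ring

lemma integral_weight_mul_deriv_other_eq (hf : ContDiff ℝ 1 f) (hh : ContDiff ℝ 1 h)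
    (hfL : f L = 0) :
    ∫ x in 0..L, 2 * x * f x * deriv h x
      = -∫ x in 0..L, (2 * f x * h x + 2 * x * deriv f x * h x) := by
  refine integral_eq_neg_integral_of_hasDerivAt_add (φ := fun x => 2 * x * f x * h x)
    (fun x _ => ?_) (by fun_prop) (by fun_prop) (by simp) (by simp [hfL])
  exact ((((hasDerivAt_id' x).const_mul 2).fun_mul
    (hf.differentiable one_ne_zero x).hasDerivAt).fun_mul
      (hh.differentiable one_ne_zero x).hasDerivAt).congr_deriv (by ring)

lemma sq_le_mul_integral_deriv_sq (hf : ContDiff ℝ 1 f) (hf0 : f 0 = 0) {x : ℝ} (hx : 0 ≤ x) :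
    f x ^ 2 ≤ x * ∫ y in 0..x, deriv f y ^ 2 := by
  have hd := hf.continuous_deriv le_rfl
  have hftc : ∫ y in 0..x, deriv f y = f x := by
    rw [integral_deriv_eq_sub (fun y _ => hf.differentiable one_ne_zero y)
      (hd.intervalIntegrable 0 x), hf0, sub_zero]
  simpa [hftc] using sq_integral_le_mul_integral_sq hd hx

lemma integral_sq_le_of_eq_zero (hf : ContDiff ℝ 1 f) (hf0 : f 0 = 0) (hL : 0 ≤ L) {δ : ℝ}
    (hδ : 0 < δ) :
    ∫ x in 0..L, f x ^ 2
      ≤ δ * L * (∫ x in 0..L, deriv f x ^ 2) + δ⁻¹ * ∫ x in 0..L, x * f x ^ 2 := by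
  set D := ∫ x in 0..L, deriv f x ^ 2
  have hc := hf.continuous
  have hd := hf.continuous_deriv le_rfl
  have hD : 0 ≤ D := integral_nonneg hL fun x _ => sq_nonneg _
  -- near `0` use `f x² ≤ x D`, away from `0` the weight `x / δ` is at least `1`
  have hpt : ∀ x ∈ Icc 0 L, f x ^ 2 ≤ δ * D + δ⁻¹ * (x * f x ^ 2) := by
    intro x ⟨hx0, hxL⟩
    rcases le_or_gt x δ with hxδ | hδx
    · have hxD : ∫ y in 0..x, deriv f y ^ 2 ≤ D :=
        integral_mono_interval le_rfl hx0 hxL (Filter.Eventually.of_forall fun _ => sq_nonneg _)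
          ((hd.pow 2).intervalIntegrable 0 L)
      have : f x ^ 2 ≤ δ * D := (sq_le_mul_integral_deriv_sq hf hf0 hx0).trans
        (mul_le_mul hxδ hxD (integral_nonneg hx0 fun _ _ => sq_nonneg _) hδ.le)
      have : 0 ≤ δ⁻¹ * (x * f x ^ 2) := by positivity
      linarith
    · have : f x ^ 2 ≤ δ⁻¹ * (x * f x ^ 2) := by
        rw [← mul_assoc]
        exact le_mul_of_one_le_left (sq_nonneg _) ((one_le_inv_mul₀ hδ).2 hδx.le)
      nlinarith
  calc ∫ x in 0..L, f x ^ 2 ≤ ∫ x in 0..L, (δ * D + δ⁻¹ * (x * f x ^ 2)) :=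
        integral_mono_on hL ((hc.pow 2).intervalIntegrable _ _)
          ((by fun_prop : Continuous _).intervalIntegrable _ _) hpt
    _ = δ * L * D + δ⁻¹ * ∫ x in 0..L, x * f x ^ 2 := by
        rw [integral_add intervalIntegrable_const
          ((by fun_prop : Continuous _).intervalIntegrable _ _),
          integral_const, integral_const_mul, smul_eq_mul]
        ring

lemma neg_integral_cross_le (hf : ContDiff ℝ 1 f) (hh : Continuous h) (hL : 0 ≤ L) :
    -∫ x in 0..L, (2 * f x * h x + 2 * x * deriv f x * h x)
      ≤ (∫ x in 0..L, f x ^ 2) + (∫ x in 0..L, deriv f x ^ 2)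
        + (1 + L ^ 2) * ∫ x in 0..L, h x ^ 2 := by
  have hpt : ∀ x ∈ Icc 0 L, -(2 * f x * h x + 2 * x * deriv f x * h x)
      ≤ f x ^ 2 + deriv f x ^ 2 + (1 + L ^ 2) * h x ^ 2 := by
    intro x ⟨hx0, hxL⟩
    have : x ^ 2 * h x ^ 2 ≤ L ^ 2 * h x ^ 2 := by gcongr
    nlinarith [sq_nonneg (f x + h x), sq_nonneg (deriv f x + x * h x)]
  rw [← integral_neg, ← integral_const_mul,
    ← integral_add ((by fun_prop : Continuous _).intervalIntegrable _ _)
      ((by fun_prop : Continuous _).intervalIntegrable _ _),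
    ← integral_add ((by fun_prop : Continuous _).intervalIntegrable _ _)
      ((by fun_prop : Continuous _).intervalIntegrable _ _)]
  exact integral_mono_on hL ((by fun_prop : Continuous _).intervalIntegrable _ _)
    ((by fun_prop : Continuous _).intervalIntegrable _ _) hpt

lemma integral_weighted_kdv_le (hf : ContDiff ℝ 3 f) (hh : ContDiff ℝ 1 h) (hL : 0 < L)
    (hf0 : f 0 = 0) (hfL : f L = 0) (hf'L : deriv f L = 0) :
    ∫ x in 0..L, 2 * x * f x * (deriv h x - deriv f x - deriv (deriv (deriv f)) x)
      ≤ 4 * L * (∫ x in 0..L, x * f x ^ 2) - (∫ x in 0..L, deriv f x ^ 2)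
        + (1 + L ^ 2) * ∫ x in 0..L, h x ^ 2 := by
  have hf1 : ContDiff ℝ 1 f := hf.of_le (by norm_num)
  have hsplit : ∫ x in 0..L, 2 * x * f x * (deriv h x - deriv f x - deriv (deriv (deriv f)) x)
      = (∫ x in 0..L, 2 * x * f x * deriv h x) - (∫ x in 0..L, 2 * x * f x * deriv f x)
        - ∫ x in 0..L, 2 * x * f x * deriv (deriv (deriv f)) x := by
    simp only [mul_sub]
    rw [integral_sub ((by fun_prop : Continuous _).intervalIntegrable _ _)
        ((by fun_prop : Continuous _).intervalIntegrable _ _),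
      integral_sub ((by fun_prop : Continuous _).intervalIntegrable _ _)
        ((by fun_prop : Continuous _).intervalIntegrable _ _)]
  have hcross := neg_integral_cross_le hf1 hh.continuous hL.le
  have hinterp := integral_sq_le_of_eq_zero hf1 hf0 hL.le (δ := (2 * L)⁻¹) (by positivity)
  rw [inv_inv, show (2 * L)⁻¹ * L = 1 / 2 by field_simp] at hinterp
  rw [hsplit, integral_weight_mul_deriv_other_eq hf1 hh hfL, integral_weight_mul_deriv_eq hf1 hfL,
    integral_weight_mul_third_deriv_eq hf hf0 hfL hf'L]
  linarith

end OneDimensional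

lemma le_exp_mul_of_hasDerivAt_le_mul {φ φ' : ℝ → ℝ} {K a b : ℝ}
    (hφ : ContinuousOn φ (Icc a b))
    (hφ' : ∀ x ∈ Ioo a b, HasDerivAt φ (φ' x) x) (hle : ∀ x ∈ Ioo a b, φ' x ≤ K * φ x)
    {x : ℝ} (hx : x ∈ Icc a b) :
    φ x ≤ Real.exp (K * (x - a)) * φ a := by
  have hψ' : ∀ y ∈ Ioo a b, HasDerivAt (fun y => Real.exp (-K * (y - a)) * φ y)
      (Real.exp (-K * (y - a)) * (φ' y - K * φ y)) y := fun y hy =>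
    ((((hasDerivAt_id' y).sub_const a).const_mul (-K)).exp.fun_mul (hφ' y hy)).congr_deriv
      (by ring)
  have hanti : AntitoneOn (fun y => Real.exp (-K * (y - a)) * φ y) (Icc a b) := by
    refine antitoneOn_of_deriv_nonpos (convex_Icc a b) (by fun_prop) ?_ ?_ <;>
      rw [interior_Icc]
    · exact fun y hy => (hψ' y hy).differentiableAt.differentiableWithinAt
    · intro y hy
      rw [(hψ' y hy).deriv]
      exact mul_nonpos_of_nonneg_of_nonpos (Real.exp_pos _).le (by linarith [hle y hy])
  have h := hanti ⟨le_rfl, hx.1.trans hx.2⟩ hx hx.1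
  simp only [sub_self, mul_zero, Real.exp_zero, one_mul] at h
  calc φ x = Real.exp (K * (x - a)) * (Real.exp (-K * (x - a)) * φ x) := by
        rw [← mul_assoc, ← Real.exp_add, neg_mul, add_neg_cancel, Real.exp_zero, one_mul]
    _ ≤ Real.exp (K * (x - a)) * φ a := by gcongr

section EnergyInequality

variable {E E' D c : ℝ → ℝ} {K T : ℝ}

lemma add_integral_le_exp_mul_of_deriv_add_le (hK : 0 ≤ K) (hE : ContinuousOn E (Icc 0 T))
    (hE' : ∀ τ ∈ Ioo 0 T, HasDerivAt E (E' τ) τ) (hD : Continuous D) (hc : Continuous c)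
    (hD0 : ∀ τ, 0 ≤ D τ) (hc0 : ∀ τ, 0 ≤ c τ) (hle : ∀ τ ∈ Ioo 0 T, E' τ + D τ ≤ K * E τ + c τ)
    {t : ℝ} (ht : t ∈ Icc 0 T) :
    E t + ∫ τ in 0..t, D τ ≤ Real.exp (K * t) * (E 0 + ∫ τ in 0..t, c τ) := by
  -- Grönwall for `E τ + ∫₀^τ D + ∫_τ^t c`, which dominates `E τ` on `[0, t]`
  set φ := fun τ => E τ + (∫ s in 0..τ, D s) + ((∫ s in 0..t, c s) - ∫ s in 0..τ, c s)
  have hφE : ∀ τ ∈ Icc 0 t, E τ ≤ φ τ := by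
    intro τ hτ
    have hD' : 0 ≤ ∫ s in 0..τ, D s := integral_nonneg hτ.1 fun s _ => hD0 s
    have hc' : 0 ≤ (∫ s in 0..t, c s) - ∫ s in 0..τ, c s := by
      rw [integral_interval_sub_left (hc.intervalIntegrable _ _) (hc.intervalIntegrable _ _)]
      exact integral_nonneg hτ.2 fun s _ => hc0 s
    simp only [φ]
    linarith
  have hEt : ContinuousOn E (Icc 0 t) := hE.mono (Icc_subset_Icc_right ht.2)
  have hDprim : Continuous fun τ => ∫ s in 0..τ, D s :=
    continuous_primitive (fun _ _ => hD.intervalIntegrable _ _) 0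
  have hcprim : Continuous fun τ => ∫ s in 0..τ, c s :=
    continuous_primitive (fun _ _ => hc.intervalIntegrable _ _) 0
  have hφ' : ∀ τ ∈ Ioo 0 t, HasDerivAt φ (E' τ + D τ - c τ) τ := fun τ hτ =>
    (((hE' τ ⟨hτ.1, hτ.2.trans_le ht.2⟩).add (hD.integral_hasStrictDerivAt 0 τ).hasDerivAt).add
      ((hc.integral_hasStrictDerivAt 0 τ).hasDerivAt.const_sub _)).congr_deriv (by ring)
  have hgron := le_exp_mul_of_hasDerivAt_le_mul (φ := φ) (K := K) (by fun_prop) hφ'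
    (fun τ hτ => ?_) (right_mem_Icc.2 ht.1)
  · simpa [φ] using hgron
  · have := hle τ ⟨hτ.1, hτ.2.trans_le ht.2⟩
    have := mul_le_mul_of_nonneg_left (hφE τ (Ioo_subset_Icc_self hτ)) hK
    linarith

lemma add_integral_le_two_mul_exp_mul (hK : 0 ≤ K) (hE : ContinuousOn E (Icc 0 T))
    (hE' : ∀ τ ∈ Ioo 0 T, HasDerivAt E (E' τ) τ) (hD : Continuous D) (hc : Continuous c)
    (hD0 : ∀ τ, 0 ≤ D τ) (hc0 : ∀ τ, 0 ≤ c τ) (hle : ∀ τ ∈ Ioo 0 T, E' τ + D τ ≤ K * E τ + c τ)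
    (hE0 : ∀ τ ∈ Icc 0 T, 0 ≤ E τ) {t : ℝ} (ht : t ∈ Icc 0 T) :
    E t + ∫ τ in 0..T, D τ ≤ 2 * Real.exp (K * T) * (E 0 + ∫ τ in 0..T, c τ) := by
  have hT : 0 ≤ T := ht.1.trans ht.2
  have hbound : ∀ s ∈ Icc 0 T,
      E s + ∫ τ in 0..s, D τ ≤ Real.exp (K * T) * (E 0 + ∫ τ in 0..T, c τ) := by
    intro s hs
    have hcs : 0 ≤ ∫ τ in 0..s, c τ := integral_nonneg hs.1 fun τ _ => hc0 τ
    have hcT : ∫ τ in 0..s, c τ ≤ ∫ τ in 0..T, c τ :=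
      integral_mono_interval le_rfl hs.1 hs.2 (Filter.Eventually.of_forall hc0)
        (hc.intervalIntegrable _ _)
    calc E s + ∫ τ in 0..s, D τ ≤ Real.exp (K * s) * (E 0 + ∫ τ in 0..s, c τ) :=
          add_integral_le_exp_mul_of_deriv_add_le hK hE hE' hD hc hD0 hc0 hle hs
      _ ≤ Real.exp (K * T) * (E 0 + ∫ τ in 0..T, c τ) := by
          have := hE0 0 ⟨le_rfl, hT⟩
          gcongr
          exact hs.2
  have h₁ := hbound t ht
  have h₂ := hbound T ⟨hT, le_rfl⟩
  have hDt : 0 ≤ ∫ τ in 0..t, D τ := integral_nonneg ht.1 fun τ _ => hD0 τ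
  linarith [hE0 T ⟨hT, le_rfl⟩]

end EnergyInequality

section KdV

variable {u g : ℝ → ℝ → ℝ} {L : ℝ}

lemma hasDerivAt_integral_mul_sq (hu : ContDiff ℝ 1 (uncurry u)) (τ : ℝ) :
    HasDerivAt (fun t => ∫ x in 0..L, x * u t x ^ 2) (∫ x in 0..L, 2 * x * u τ x * pdt u τ x) τ :=
  hasDerivAt_intervalIntegral_of_continuous (F := fun t x => x * u t x ^ 2)
    (F' := fun t x => 2 * x * u t x * pdt u t x) (continuous_snd.fun_mul (hu.continuous.fun_pow 2))
    (((continuous_const.fun_mul continuous_snd).fun_mul hu.continuous).fun_mul (continuous_pdt hu))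
    (fun t x => (((hasDerivAt_pdt (hu.differentiable one_ne_zero) t x).fun_pow 2).const_mul
      x).congr_deriv (by ring)) 0 L τ

lemma kdv_weighted_energy_le (hu : ContDiff ℝ 3 (uncurry u)) (hg : ContDiff ℝ 1 (uncurry g))
    (hL : 0 < L) {τ : ℝ}
    (hpde : ∀ x ∈ Ioo 0 L, pdt u τ x + pdx u τ x + pdx (pdx (pdx u)) τ x = pdx g τ x)
    (hu0 : u τ 0 = 0) (huL : u τ L = 0) (hu'L : pdx u τ L = 0) :
    (∫ x in 0..L, 2 * x * u τ x * pdt u τ x) + ∫ x in 0..L, pdx u τ x ^ 2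
      ≤ 4 * L * (∫ x in 0..L, x * u τ x ^ 2) + (1 + L ^ 2) * ∫ x in 0..L, g τ x ^ 2 := by
  have hut : ∫ x in 0..L, 2 * x * u τ x * pdt u τ x = ∫ x in 0..L, 2 * x * u τ x *
      (pdx g τ x - pdx u τ x - pdx (pdx (pdx u)) τ x) :=
    integral_congr_Ioo_of_le hL.le fun x hx => by
      rw [← hpde x hx]
      ring
  have hkdv : ∫ x in 0..L, 2 * x * u τ x * (pdx g τ x - pdx u τ x - pdx (pdx (pdx u)) τ x)
      ≤ 4 * L * (∫ x in 0..L, x * u τ x ^ 2) - (∫ x in 0..L, pdx u τ x ^ 2)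
        + (1 + L ^ 2) * ∫ x in 0..L, g τ x ^ 2 :=
    integral_weighted_kdv_le (hu.uncurry_left τ) (hg.uncurry_left τ) hL hu0 huL hu'L
  linarith

end KdV

theorem stmt_14_general (L T : ℝ) (hL : 0 < L) :
    ∃ C : ℝ, 0 < C ∧
      ∀ g u : ℝ → ℝ → ℝ, ContDiff ℝ (⊤ : ℕ∞) (Function.uncurry g) →
        ContDiff ℝ (⊤ : ℕ∞) (Function.uncurry u) →
        (∀ t ∈ Set.Ioo (0:ℝ) T, ∀ x ∈ Set.Ioo (0:ℝ) L,
          pdt u t x + pdx u t x + pdx (pdx (pdx u)) t x = pdx g t x) →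
        (∀ t ∈ Set.Icc (0:ℝ) T, u t 0 = 0 ∧ u t L = 0 ∧ pdx u t L = 0) →
        ∀ t ∈ Set.Icc (0:ℝ) T,
          (∫ x in (0:ℝ)..L, x * (u t x) ^ 2)
            + (∫ τ in (0:ℝ)..T, ∫ x in (0:ℝ)..L, (pdx u τ x) ^ 2) ≤
          C * ((∫ x in (0:ℝ)..L, x * (u 0 x) ^ 2)
            + ∫ τ in (0:ℝ)..T, ∫ x in (0:ℝ)..L, (g τ x) ^ 2) := by
  refine ⟨2 * Real.exp (4 * L * T) * (1 + L ^ 2), by positivity, ?_⟩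
  intro g u hg hu hpde hbc t ht
  have hu3 : ContDiff ℝ 3 (uncurry u) := hu.of_le (by norm_cast)
  have hu1 : ContDiff ℝ 1 (uncurry u) := hu.of_le (by norm_cast)
  have hg1 : ContDiff ℝ 1 (uncurry g) := hg.of_le (by norm_cast)
  have hE0 : ∀ τ ∈ Icc 0 T, 0 ≤ ∫ x in 0..L, x * u τ x ^ 2 :=
    fun τ _ => integral_nonneg hL.le fun x hx => mul_nonneg hx.1 (sq_nonneg _)
  have key := add_integral_le_two_mul_exp_mul (E := fun τ => ∫ x in 0..L, x * u τ x ^ 2)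
    (D := fun τ => ∫ x in 0..L, pdx u τ x ^ 2) (c := fun τ => (1 + L ^ 2) * ∫ x in 0..L, g τ x ^ 2)
    (K := 4 * L) (by positivity)
    (fun τ _ => (hasDerivAt_integral_mul_sq hu1 τ).continuousAt.continuousWithinAt)
    (fun τ _ => hasDerivAt_integral_mul_sq hu1 τ)
    (continuous_parametric_intervalIntegral_of_continuous' ((continuous_pdx hu1).fun_pow 2) 0 L)
    (continuous_const.fun_mul
      (continuous_parametric_intervalIntegral_of_continuous' (hg.continuous.fun_pow 2) 0 L))
    (fun τ => integral_nonneg hL.le fun x _ => sq_nonneg _)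
    (fun τ => mul_nonneg (by positivity) (integral_nonneg hL.le fun x _ => sq_nonneg _))
    (fun τ hτ => by
      obtain ⟨hu0, huL, hu'L⟩ := hbc τ (Ioo_subset_Icc_self hτ)
      exact kdv_weighted_energy_le hu3 hg1 hL (hpde τ hτ) hu0 huL hu'L)
    hE0 ht
  rw [integral_const_mul] at key
  refine key.trans ?_
  have := hE0 0 ⟨le_rfl, ht.1.trans ht.2⟩
  rw [mul_assoc _ (1 + L ^ 2)]
  gcongr
  nlinarith

/-- a priori estimate for linear KdV with `H⁻¹` forcing `g_x`,
in the weighted space `L²_{x dx}`: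
`max_{t∈[0,T]} ∫ x u(t)² dx + ∫∫ u_x² ≤ C (∫ x u(0)² dx + ∫∫ g²)`
(the max over `t` is expressed as a bound for every `t ∈ [0,T]`). -/
theorem stmt_14 (L T : ℝ) (hL : 0 < L) (hT : 0 < T) :
    ∃ C : ℝ, 0 < C ∧
      ∀ g u : ℝ → ℝ → ℝ, ContDiff ℝ (⊤ : ℕ∞) (Function.uncurry g) →
        ContDiff ℝ (⊤ : ℕ∞) (Function.uncurry u) →
        (∀ t ∈ Set.Ioo (0:ℝ) T, ∀ x ∈ Set.Ioo (0:ℝ) L,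
          pdt u t x + pdx u t x + pdx (pdx (pdx u)) t x = pdx g t x) →
        (∀ t ∈ Set.Icc (0:ℝ) T, u t 0 = 0 ∧ u t L = 0 ∧ pdx u t L = 0) →
        ∀ t ∈ Set.Icc (0:ℝ) T,
          (∫ x in (0:ℝ)..L, x * (u t x) ^ 2)
            + (∫ τ in (0:ℝ)..T, ∫ x in (0:ℝ)..L, (pdx u τ x) ^ 2) ≤
          C * ((∫ x in (0:ℝ)..L, x * (u 0 x) ^ 2)
            + ∫ τ in (0:ℝ)..T, ∫ x in (0:ℝ)..L, (g τ x) ^ 2) :=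
  stmt_14_general L T hL
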